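/- arXiv:2307.06535 — 2 statements merged into one kernel-verified Lean document; each statement's English description precedes it below -/
import Mathlib

section
/- If t is a C-tensor with support ⟨e,h,ℓ⟩ whose components are all isomorphic to ⟨m,n,p⟩, and t' is a C-tensor with support ⟨e',h',ℓ'⟩ whose components are all isomorphic to ⟨m',n',p'⟩, then t ⊗ t' is a C-tensor with support ⟨ee',hh',ℓℓ'⟩ whose components are all isomorphic to ⟨mm',nn',pp'⟩. -/
open Finset in
/-- A tensor over `F` is given by its coordinate array with respect to fixed
bases of the three spaces. -/
abbrev Tensor (F : Type*) (ι₁ ι₂ ι₃ : Type*) := ι₁ → ι₂ → ι₃ → F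

/-- Tensor (Kronecker) product of two tensors. -/
def tmul {F : Type*} [Field F] {ι₁ ι₂ ι₃ κ₁ κ₂ κ₃ : Type*}
    (t : Tensor F ι₁ ι₂ ι₃) (t' : Tensor F κ₁ κ₂ κ₃) :
    Tensor F (ι₁ × κ₁) (ι₂ × κ₂) (ι₃ × κ₃) :=
  fun a b c => t a.1 b.1 c.1 * t' a.2 b.2 c.2

/-- `t` is a degeneration of `r·⟨1,1,1⟩`: there are `r`-term families of vectors
with entries polynomial in an indeterminate `ε` such that
`∑_l u_l ⊗ v_l ⊗ w_l = ε^h · t + O(ε^{h+1})`. -/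
def BorderDecomp {F : Type*} [Field F] {ι₁ ι₂ ι₃ : Type*}
    [Fintype ι₁] [Fintype ι₂] [Fintype ι₃]
    (t : Tensor F ι₁ ι₂ ι₃) (r : ℕ) : Prop :=
  ∃ (h : ℕ) (u : Fin r → ι₁ → Polynomial F) (v : Fin r → ι₂ → Polynomial F)
    (w : Fin r → ι₃ → Polynomial F), ∀ i j k,
      (∀ m < h, (∑ l, u l i * v l j * w l k).coeff m = 0) ∧
      (∑ l, u l i * v l j * w l k).coeff h = t i j k

/-- The border rank of a tensor. -/
noncomputable def borderRank {F : Type*} [Field F] {ι₁ ι₂ ι₃ : Type*}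
    [Fintype ι₁] [Fintype ι₂] [Fintype ι₃] (t : Tensor F ι₁ ι₂ ι₃) : ℕ :=
  sInf {r | BorderDecomp t r}

/-- Two tensors are isomorphic if one is obtained from the other by invertible
linear changes of basis in each of the three factors. -/
def TIso {F : Type*} [Field F] {ι₁ ι₂ ι₃ κ₁ κ₂ κ₃ : Type*}
    [Fintype ι₁] [Fintype ι₂] [Fintype ι₃] [Fintype κ₁] [Fintype κ₂] [Fintype κ₃]
    [DecidableEq ι₁] [DecidableEq ι₂] [DecidableEq ι₃]
    [DecidableEq κ₁] [DecidableEq κ₂] [DecidableEq κ₃]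
    (t : Tensor F ι₁ ι₂ ι₃) (t' : Tensor F κ₁ κ₂ κ₃) : Prop :=
  ∃ (A : Matrix κ₁ ι₁ F) (A' : Matrix ι₁ κ₁ F) (B : Matrix κ₂ ι₂ F)
    (B' : Matrix ι₂ κ₂ F) (C : Matrix κ₃ ι₃ F) (C' : Matrix ι₃ κ₃ F),
    A * A' = 1 ∧ A' * A = 1 ∧ B * B' = 1 ∧ B' * B = 1 ∧ C * C' = 1 ∧ C' * C = 1 ∧
    ∀ a b c, t' a b c = ∑ i, ∑ j, ∑ k, A a i * B b j * C c k * t i j k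

/-- The matrix multiplication tensor `⟨m,n,p⟩ = ∑ x_{rs} ⊗ y_{st} ⊗ z_{rt}`. -/
def MM (F : Type*) [Field F] (m n p : ℕ) :
    Tensor F (Fin m × Fin n) (Fin n × Fin p) (Fin m × Fin p) :=
  fun a b c => if a.1 = c.1 ∧ a.2 = b.1 ∧ b.2 = c.2 then 1 else 0

/-- `t` is a C-tensor with support `⟨|E|,|H|,|L|⟩` whose components are all
isomorphic to `⟨m,n,p⟩`: the three spaces decompose as
`U = ⊕_{i,j} U_{i,j}`, `V = ⊕_{j,k} V_{j,k}`, `W = ⊕_{i,k} W_{i,k}`,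
the piece of `t` in `U_{i,j} ⊗ V_{j',k} ⊗ W_{i',k'}` vanishes unless
`i = i'`, `j = j'`, `k = k'`, and each component `t_{ijk}` is isomorphic
to the matrix multiplication tensor `⟨m,n,p⟩`. -/
def IsCTensor (F : Type*) [Field F] {E H L : Type*}
    [Fintype E] [Fintype H] [Fintype L] [DecidableEq E] [DecidableEq H] [DecidableEq L]
    (m n p : ℕ) (ιU : E → H → Type*) (ιV : H → L → Type*) (ιW : E → L → Type*)
    [∀ i j, Fintype (ιU i j)] [∀ i j, DecidableEq (ιU i j)]
    [∀ j k, Fintype (ιV j k)] [∀ j k, DecidableEq (ιV j k)]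
    [∀ i k, Fintype (ιW i k)] [∀ i k, DecidableEq (ιW i k)]
    (t : Tensor F ((i : E) × (j : H) × ιU i j) ((j : H) × (k : L) × ιV j k)
      ((i : E) × (k : L) × ιW i k)) : Prop :=
  (∀ x : (i : E) × (j : H) × ιU i j, ∀ y : (j : H) × (k : L) × ιV j k,
      ∀ z : (i : E) × (k : L) × ιW i k,
      ¬(x.1 = z.1 ∧ x.2.1 = y.1 ∧ y.2.1 = z.2.1) → t x y z = 0) ∧
  (∀ (i : E) (j : H) (k : L),
    TIso (fun (u : ιU i j) (v : ιV j k) (w : ιW i k) => t ⟨i, j, u⟩ ⟨j, k, v⟩ ⟨i, k, w⟩)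
      (MM F m n p))

/-! Base changes of a three-way tensor compose, and the base change of a Kronecker product
by Kronecker products of matrices is the Kronecker product of the base changes; hence
isomorphism of tensors is transitive and compatible with `tmul`. The component of `t ⊗ t'` at
`((i,i'),(j,j'),(k,k'))` is `t_{ijk} ⊗ t'_{i'j'k'} ≅ ⟨m,n,p⟩ ⊗ ⟨m',n',p'⟩`, and
`⟨m,n,p⟩ ⊗ ⟨m',n',p'⟩` is `⟨mm',nn',pp'⟩` with its bases reindexed through
`Fin (m * m') ≃ Fin m × Fin m'`. The support condition holds factor by factor. -/

namespace Matrix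

variable {α : Type*}

theorem one_submatrix_mul_one_submatrix [NonAssocSemiring α] {ι κ : Type*} [Fintype ι]
    [DecidableEq ι] [DecidableEq κ] {e : κ → ι} (he : Function.Injective e) :
    (1 : Matrix ι ι α).submatrix e id * (1 : Matrix ι ι α).submatrix id e = 1 := by
  rw [← submatrix_mul _ _ _ _ _ Function.bijective_id, Matrix.one_mul, submatrix_one _ he]

theorem one_submatrix_mul_one_submatrix' [NonAssocSemiring α] {ι κ : Type*} [Fintype ι]
    [Fintype κ] [DecidableEq ι] {e : κ → ι} (he : Function.Bijective e) :
    (1 : Matrix ι ι α).submatrix id e * (1 : Matrix ι ι α).submatrix e id = 1 := by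
  rw [← submatrix_mul _ _ _ _ _ he, Matrix.one_mul, submatrix_id_id]

theorem mul_mul_mul_rev_eq_one [Semiring α] {l m n : Type*} [Fintype m] [Fintype n]
    [DecidableEq l] [DecidableEq m] {X : Matrix l m α} {X' : Matrix m l α} {Y : Matrix m n α}
    {Y' : Matrix n m α} (hY : Y * Y' = 1) (hX : X * X' = 1) : X * Y * (Y' * X') = 1 := by
  rw [Matrix.mul_assoc, ← Matrix.mul_assoc Y, hY, Matrix.one_mul, hX]

open Kronecker in
theorem kronecker_mul_kronecker_eq_one [CommSemiring α] {l m n o : Type*} [Fintype m]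
    [Fintype o] [DecidableEq l] [DecidableEq n] {X : Matrix l m α} {X' : Matrix m l α}
    {Y : Matrix n o α} {Y' : Matrix o n α} (hX : X * X' = 1) (hY : Y * Y' = 1) :
    (X ⊗ₖ Y) * (X' ⊗ₖ Y') = 1 := by
  rw [← mul_kronecker_mul, hX, hY, one_kronecker_one]

end Matrix

section

variable {F : Type*} [Field F]

open Matrix Kronecker

def changeBasis {ι₁ ι₂ ι₃ κ₁ κ₂ κ₃ : Type*} [Fintype ι₁] [Fintype ι₂] [Fintype ι₃]
    (A : Matrix κ₁ ι₁ F) (B : Matrix κ₂ ι₂ F) (C : Matrix κ₃ ι₃ F)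
    (t : Tensor F ι₁ ι₂ ι₃) : Tensor F κ₁ κ₂ κ₃ :=
  fun a b c => ∑ i, ∑ j, ∑ k, A a i * B b j * C c k * t i j k

theorem changeBasis_apply_eq_mulVec {ι₁ ι₂ ι₃ κ₁ κ₂ κ₃ : Type*} [Fintype ι₁] [Fintype ι₂]
    [Fintype ι₃] (A : Matrix κ₁ ι₁ F) (B : Matrix κ₂ ι₂ F) (C : Matrix κ₃ ι₃ F)
    (t : Tensor F ι₁ ι₂ ι₃) (a : κ₁) (b : κ₂) (c : κ₃) :
    changeBasis A B C t a b c = ((A ⊗ₖ (B ⊗ₖ C)) *ᵥ fun x => t x.1 x.2.1 x.2.2) (a, b, c) := by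
  simp only [changeBasis, mulVec, dotProduct, Fintype.sum_prod_type, kroneckerMap_apply,
    mul_assoc]

theorem changeBasis_changeBasis {ι₁ ι₂ ι₃ κ₁ κ₂ κ₃ μ₁ μ₂ μ₃ : Type*} [Fintype ι₁] [Fintype ι₂]
    [Fintype ι₃] [Fintype κ₁] [Fintype κ₂] [Fintype κ₃]
    (A₁ : Matrix κ₁ ι₁ F) (B₁ : Matrix κ₂ ι₂ F) (C₁ : Matrix κ₃ ι₃ F)
    (A₂ : Matrix μ₁ κ₁ F) (B₂ : Matrix μ₂ κ₂ F) (C₂ : Matrix μ₃ κ₃ F) (t : Tensor F ι₁ ι₂ ι₃) :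
    changeBasis A₂ B₂ C₂ (changeBasis A₁ B₁ C₁ t) =
      changeBasis (A₂ * A₁) (B₂ * B₁) (C₂ * C₁) t := by
  funext a b c
  simp only [changeBasis_apply_eq_mulVec, Prod.mk.eta, mulVec_mulVec, mul_kronecker_mul]

theorem changeBasis_tmul {ι₁ ι₂ ι₃ κ₁ κ₂ κ₃ ι₁' ι₂' ι₃' κ₁' κ₂' κ₃' : Type*} [Fintype ι₁]
    [Fintype ι₂] [Fintype ι₃] [Fintype ι₁'] [Fintype ι₂'] [Fintype ι₃']
    (A : Matrix κ₁ ι₁ F) (B : Matrix κ₂ ι₂ F) (C : Matrix κ₃ ι₃ F)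
    (A' : Matrix κ₁' ι₁' F) (B' : Matrix κ₂' ι₂' F) (C' : Matrix κ₃' ι₃' F)
    (t : Tensor F ι₁ ι₂ ι₃) (t' : Tensor F ι₁' ι₂' ι₃') :
    changeBasis (A ⊗ₖ A') (B ⊗ₖ B') (C ⊗ₖ C') (tmul t t') =
      tmul (changeBasis A B C t) (changeBasis A' B' C' t') := by
  funext a b c
  simp only [tmul, changeBasis, Fintype.sum_prod_type, Finset.sum_mul_sum, kroneckerMap_apply]
  congr! 6
  ring

theorem changeBasis_one_submatrix {ι₁ ι₂ ι₃ κ₁ κ₂ κ₃ : Type*} [Fintype ι₁] [Fintype ι₂]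
    [Fintype ι₃] [DecidableEq ι₁] [DecidableEq ι₂] [DecidableEq ι₃]
    (e₁ : κ₁ → ι₁) (e₂ : κ₂ → ι₂) (e₃ : κ₃ → ι₃) (t : Tensor F ι₁ ι₂ ι₃) :
    changeBasis ((1 : Matrix ι₁ ι₁ F).submatrix e₁ id) ((1 : Matrix ι₂ ι₂ F).submatrix e₂ id)
      ((1 : Matrix ι₃ ι₃ F).submatrix e₃ id) t = fun a b c => t (e₁ a) (e₂ b) (e₃ c) := by
  funext a b c
  simp [changeBasis, one_apply, ite_mul, Finset.sum_ite_eq]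

variable {ι₁ ι₂ ι₃ κ₁ κ₂ κ₃ : Type*}
    [Fintype ι₁] [Fintype ι₂] [Fintype ι₃] [Fintype κ₁] [Fintype κ₂] [Fintype κ₃]
    [DecidableEq ι₁] [DecidableEq ι₂] [DecidableEq ι₃]
    [DecidableEq κ₁] [DecidableEq κ₂] [DecidableEq κ₃]

theorem TIso.trans {μ₁ μ₂ μ₃ : Type*} [Fintype μ₁] [Fintype μ₂] [Fintype μ₃]
    [DecidableEq μ₁] [DecidableEq μ₂] [DecidableEq μ₃]
    {t : Tensor F ι₁ ι₂ ι₃} {t' : Tensor F κ₁ κ₂ κ₃} {t'' : Tensor F μ₁ μ₂ μ₃}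
    (h₁ : TIso t t') (h₂ : TIso t' t'') : TIso t t'' := by
  obtain ⟨A₁, A₁', B₁, B₁', C₁, C₁', hA₁, hA₁', hB₁, hB₁', hC₁, hC₁', ht'⟩ := h₁
  obtain ⟨A₂, A₂', B₂, B₂', C₂, C₂', hA₂, hA₂', hB₂, hB₂', hC₂, hC₂', ht''⟩ := h₂
  refine ⟨A₂ * A₁, A₁' * A₂', B₂ * B₁, B₁' * B₂', C₂ * C₁, C₁' * C₂',
    mul_mul_mul_rev_eq_one hA₁ hA₂, mul_mul_mul_rev_eq_one hA₂' hA₁',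
    mul_mul_mul_rev_eq_one hB₁ hB₂, mul_mul_mul_rev_eq_one hB₂' hB₁',
    mul_mul_mul_rev_eq_one hC₁ hC₂, mul_mul_mul_rev_eq_one hC₂' hC₁', fun a b c => ?_⟩
  have ht' : t' = changeBasis A₁ B₁ C₁ t := funext₃ ht'
  calc t'' a b c = changeBasis A₂ B₂ C₂ t' a b c := ht'' a b c
    _ = changeBasis (A₂ * A₁) (B₂ * B₁) (C₂ * C₁) t a b c := by
      rw [ht', changeBasis_changeBasis]

theorem TIso.tmul {ι₁' ι₂' ι₃' κ₁' κ₂' κ₃' : Type*}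
    [Fintype ι₁'] [Fintype ι₂'] [Fintype ι₃'] [Fintype κ₁'] [Fintype κ₂'] [Fintype κ₃']
    [DecidableEq ι₁'] [DecidableEq ι₂'] [DecidableEq ι₃']
    [DecidableEq κ₁'] [DecidableEq κ₂'] [DecidableEq κ₃']
    {t : Tensor F ι₁ ι₂ ι₃} {s : Tensor F κ₁ κ₂ κ₃}
    {t' : Tensor F ι₁' ι₂' ι₃'} {s' : Tensor F κ₁' κ₂' κ₃'}
    (h : TIso t s) (h' : TIso t' s') : TIso (tmul t t') (tmul s s') := by
  obtain ⟨A, A', B, B', C, C', hA, hA', hB, hB', hC, hC', hs⟩ := h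
  obtain ⟨D, D', E, E', G, G', hD, hD', hE, hE', hG, hG', hs'⟩ := h'
  refine ⟨A ⊗ₖ D, A' ⊗ₖ D', B ⊗ₖ E, B' ⊗ₖ E', C ⊗ₖ G, C' ⊗ₖ G',
    kronecker_mul_kronecker_eq_one hA hD, kronecker_mul_kronecker_eq_one hA' hD',
    kronecker_mul_kronecker_eq_one hB hE, kronecker_mul_kronecker_eq_one hB' hE',
    kronecker_mul_kronecker_eq_one hC hG, kronecker_mul_kronecker_eq_one hC' hG',
    fun a b c => ?_⟩
  rw [funext₃ hs, funext₃ hs']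
  exact congrFun₃ (changeBasis_tmul A B C D E G t t').symm a b c

theorem tIso_reindex (t : Tensor F ι₁ ι₂ ι₃) (e₁ : κ₁ ≃ ι₁) (e₂ : κ₂ ≃ ι₂) (e₃ : κ₃ ≃ ι₃) :
    TIso t fun a b c => t (e₁ a) (e₂ b) (e₃ c) :=
  ⟨_, _, _, _, _, _, one_submatrix_mul_one_submatrix e₁.injective,
    one_submatrix_mul_one_submatrix' e₁.bijective,
    one_submatrix_mul_one_submatrix e₂.injective, one_submatrix_mul_one_submatrix' e₂.bijective,
    one_submatrix_mul_one_submatrix e₃.injective, one_submatrix_mul_one_submatrix' e₃.bijective,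
    fun a b c => (congrFun₃ (changeBasis_one_submatrix e₁ e₂ e₃ t) a b c).symm⟩

end

def finMulProdFinMulEquiv (m n m' n' : ℕ) :
    Fin (m * m') × Fin (n * n') ≃ (Fin m × Fin n) × (Fin m' × Fin n') :=
  (finProdFinEquiv.symm.prodCongr finProdFinEquiv.symm).trans (Equiv.prodProdProdComm _ _ _ _)

theorem MM_mul_eq_tmul (F : Type*) [Field F] (m n p m' n' p' : ℕ) :
    MM F (m * m') (n * n') (p * p') = fun a b c =>
      tmul (MM F m n p) (MM F m' n' p') (finMulProdFinMulEquiv m n m' n' a)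
        (finMulProdFinMulEquiv n p n' p' b) (finMulProdFinMulEquiv m p m' p' c) := by
  funext a b c
  simp only [MM, tmul, finMulProdFinMulEquiv, Equiv.trans_apply, Equiv.prodCongr_apply,
    Equiv.prodProdProdComm_apply, Prod.map, ite_zero_mul_ite_zero, mul_one,
    ← finProdFinEquiv.symm.injective.eq_iff, Prod.ext_iff]
  exact if_congr (by tauto) rfl rfl

theorem tIso_tmul_MM (F : Type*) [Field F] (m n p m' n' p' : ℕ) :
    TIso (tmul (MM F m n p) (MM F m' n' p')) (MM F (m * m') (n * n') (p * p')) := by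
  rw [MM_mul_eq_tmul]
  exact tIso_reindex _ _ _ _

/-- If `t` is a C-tensor with support `⟨e,h,ℓ⟩` whose components are all isomorphic
to `⟨m,n,p⟩` and `t'` is a C-tensor with support `⟨e',h',ℓ'⟩` whose components are all
isomorphic to `⟨m',n',p'⟩`, then `t ⊗ t'` is a C-tensor with support `⟨ee',hh',ℓℓ'⟩`
whose components are all isomorphic to `⟨mm',nn',pp'⟩`. -/
theorem stmt4 {F : Type*} [Field F] {E H L E' H' L' : Type*}
    [Fintype E] [Fintype H] [Fintype L] [DecidableEq E] [DecidableEq H] [DecidableEq L]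
    [Fintype E'] [Fintype H'] [Fintype L'] [DecidableEq E'] [DecidableEq H'] [DecidableEq L']
    (m n p m' n' p' : ℕ)
    (ιU : E → H → Type*) (ιV : H → L → Type*) (ιW : E → L → Type*)
    (ιU' : E' → H' → Type*) (ιV' : H' → L' → Type*) (ιW' : E' → L' → Type*)
    [∀ i j, Fintype (ιU i j)] [∀ i j, DecidableEq (ιU i j)]
    [∀ j k, Fintype (ιV j k)] [∀ j k, DecidableEq (ιV j k)]
    [∀ i k, Fintype (ιW i k)] [∀ i k, DecidableEq (ιW i k)]
    [∀ i j, Fintype (ιU' i j)] [∀ i j, DecidableEq (ιU' i j)]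
    [∀ j k, Fintype (ιV' j k)] [∀ j k, DecidableEq (ιV' j k)]
    [∀ i k, Fintype (ιW' i k)] [∀ i k, DecidableEq (ιW' i k)]
    (t : Tensor F ((i : E) × (j : H) × ιU i j) ((j : H) × (k : L) × ιV j k)
      ((i : E) × (k : L) × ιW i k))
    (t' : Tensor F ((i : E') × (j : H') × ιU' i j) ((j : H') × (k : L') × ιV' j k)
      ((i : E') × (k : L') × ιW' i k))
    (ht : IsCTensor F m n p ιU ιV ιW t) (ht' : IsCTensor F m' n' p' ιU' ιV' ιW' t') :
    IsCTensor F (m * m') (n * n') (p * p')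
      (fun (i : E × E') (j : H × H') => ιU i.1 j.1 × ιU' i.2 j.2)
      (fun (j : H × H') (k : L × L') => ιV j.1 k.1 × ιV' j.2 k.2)
      (fun (i : E × E') (k : L × L') => ιW i.1 k.1 × ιW' i.2 k.2)
      (fun x y z =>
        t ⟨x.1.1, x.2.1.1, x.2.2.1⟩ ⟨y.1.1, y.2.1.1, y.2.2.1⟩ ⟨z.1.1, z.2.1.1, z.2.2.1⟩ *
        t' ⟨x.1.2, x.2.1.2, x.2.2.2⟩ ⟨y.1.2, y.2.1.2, y.2.2.2⟩ ⟨z.1.2, z.2.1.2, z.2.2.2⟩) := by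
  refine ⟨fun x y z hxyz => ?_, fun i j k => ?_⟩
  · by_contra hne
    obtain ⟨hne₁, hne₂⟩ := mul_ne_zero_iff.mp hne
    obtain ⟨h₁, h₂, h₃⟩ := not_not.mp (mt (ht.1 _ _ _) hne₁)
    obtain ⟨h₁', h₂', h₃'⟩ := not_not.mp (mt (ht'.1 _ _ _) hne₂)
    exact hxyz ⟨Prod.ext h₁ h₁', Prod.ext h₂ h₂', Prod.ext h₃ h₃'⟩
  · exact ((ht.2 i.1 j.1 k.1).tmul (ht'.2 i.2 j.2 k.2)).trans (tIso_tmul_MM F m n p m' n' p')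
end

section
/- For the Coppersmith-Winograd tensor T_CW over F^{q+2} ⊗ F^{q+2} ⊗ F^{q+2}, the border rank satisfies R̲(T_CW) ≤ q + 2. -/
/-- The Coppersmith–Winograd tensor over `F^{q+2} ⊗ F^{q+2} ⊗ F^{q+2}`:
`T_CW = ∑_{i=1}^q (x_0⊗y_i⊗z_i + x_i⊗y_0⊗z_i + x_i⊗y_i⊗z_0)
        + x_0⊗y_0⊗z_{q+1} + x_0⊗y_{q+1}⊗z_0 + x_{q+1}⊗y_0⊗z_0`. -/
def TCW (F : Type*) [Field F] (q : ℕ) : Tensor F (Fin (q + 2)) (Fin (q + 2)) (Fin (q + 2)) :=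
  fun i j k =>
    (if (i : ℕ) = 0 ∧ (j : ℕ) = (k : ℕ) ∧ 1 ≤ (j : ℕ) ∧ (j : ℕ) ≤ q then 1 else 0) +
    (if (j : ℕ) = 0 ∧ (i : ℕ) = (k : ℕ) ∧ 1 ≤ (i : ℕ) ∧ (i : ℕ) ≤ q then 1 else 0) +
    (if (k : ℕ) = 0 ∧ (i : ℕ) = (j : ℕ) ∧ 1 ≤ (i : ℕ) ∧ (i : ℕ) ≤ q then 1 else 0) +
    (if (i : ℕ) = 0 ∧ (j : ℕ) = 0 ∧ (k : ℕ) = q + 1 then 1 else 0) +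
    (if (i : ℕ) = 0 ∧ (j : ℕ) = q + 1 ∧ (k : ℕ) = 0 then 1 else 0) +
    (if (i : ℕ) = q + 1 ∧ (j : ℕ) = 0 ∧ (k : ℕ) = 0 then 1 else 0)

/-! Coppersmith and Winograd's degeneration: with `x_l` the standard basis vectors,
`ε ∑_{l=1}^q (x_0 + ε x_l)^{⊗3} - (x_0 + ε² ∑_{l=1}^q x_l)^{⊗3} + (1 - qε) (x_0 + ε³ x_{q+1})^{⊗3}`
is `ε³ T_CW + O(ε⁴)`, and it has `q + 2` rank-one summands. On expanding, the `ε⁰` and `ε¹`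
terms cancel because the first sum has exactly `q` terms, the `ε²` terms cancel by linearity,
and what is left at `ε³` is `∑_l (x_l ⊗ x_l ⊗ x_0 + permutations)` from the first sum and
`x_{q+1} ⊗ x_0 ⊗ x_0 + permutations` from the last term, which is `T_CW`. -/

open Polynomial Finset

theorem coeff_of_X_pow_succ_dvd_sub_C_mul_X_pow {R : Type*} [CommRing R] {p : R[X]} {a : R}
    {h : ℕ} (hp : X ^ (h + 1) ∣ p - C a * X ^ h) : (∀ m < h, p.coeff m = 0) ∧ p.coeff h = a := by
  rw [X_pow_dvd_iff] at hp
  refine ⟨fun m hm => ?_, ?_⟩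
  · simpa [coeff_C_mul_X_pow, hm.ne] using hp m (by omega)
  · simpa [sub_eq_zero] using hp h (by omega)

theorem borderDecomp_of_X_pow_succ_dvd {F ι₁ ι₂ ι₃ κ : Type*} [Field F]
    [Fintype ι₁] [Fintype ι₂] [Fintype ι₃] [Fintype κ] {t : Tensor F ι₁ ι₂ ι₃} (h : ℕ)
    (u : κ → ι₁ → F[X]) (v : κ → ι₂ → F[X]) (w : κ → ι₃ → F[X])
    (huvw : ∀ i j k, X ^ (h + 1) ∣ ∑ l, u l i * v l j * w l k - C (t i j k) * X ^ h) :
    BorderDecomp t (Fintype.card κ) := by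
  classical
  let e := (Fintype.equivFin κ).symm
  refine ⟨h, fun l => u (e l), fun l => v (e l), fun l => w (e l), fun i j k => ?_⟩
  rw [e.sum_comp fun l => u l i * v l j * w l k]
  exact coeff_of_X_pow_succ_dvd_sub_C_mul_X_pow (huvw i j k)

theorem pow_four_dvd_cw_expansion {R κ : Type*} [CommRing R] (s : Finset κ)
    (x e₁ e₂ e₃ g₁ g₂ g₃ : R) (f₁ f₂ f₃ : κ → R) :
    x ^ 4 ∣ ∑ l ∈ s, x * (e₁ + x * f₁ l) * (e₂ + x * f₂ l) * (e₃ + x * f₃ l)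
      - (e₁ + x ^ 2 * ∑ l ∈ s, f₁ l) * (e₂ + x ^ 2 * ∑ l ∈ s, f₂ l) * (e₃ + x ^ 2 * ∑ l ∈ s, f₃ l)
      + (1 - #s * x) * (e₁ + x ^ 3 * g₁) * (e₂ + x ^ 3 * g₂) * (e₃ + x ^ 3 * g₃)
      - x ^ 3 * (e₁ * ∑ l ∈ s, f₂ l * f₃ l + e₂ * ∑ l ∈ s, f₁ l * f₃ l
        + e₃ * ∑ l ∈ s, f₁ l * f₂ l + e₁ * (e₂ * g₃) + e₁ * (g₂ * e₃) + g₁ * (e₂ * e₃)) := by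
  have expand : ∀ l, x * (e₁ + x * f₁ l) * (e₂ + x * f₂ l) * (e₃ + x * f₃ l) =
      x * (e₁ * e₂ * e₃) + x ^ 2 * (f₁ l * (e₂ * e₃) + f₂ l * (e₁ * e₃) + f₃ l * (e₁ * e₂))
        + x ^ 3 * (e₁ * (f₂ l * f₃ l) + e₂ * (f₁ l * f₃ l) + e₃ * (f₁ l * f₂ l))
        + x ^ 4 * (f₁ l * f₂ l * f₃ l) := fun l => by ring
  simp only [expand, sum_add_distrib, ← mul_sum, ← sum_mul, sum_const, nsmul_eq_mul]
  set S₁ := ∑ l ∈ s, f₁ l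
  set S₂ := ∑ l ∈ s, f₂ l
  set S₃ := ∑ l ∈ s, f₃ l
  exact ⟨∑ l ∈ s, f₁ l * f₂ l * f₃ l - (e₁ * S₂ * S₃ + e₂ * S₁ * S₃ + e₃ * S₁ * S₂)
    - x ^ 2 * S₁ * S₂ * S₃ - #s * (e₁ * e₂ * g₃ + e₁ * g₂ * e₃ + g₁ * e₂ * e₃)
    + (1 - #s * x) * (x ^ 2 * (e₁ * g₂ * g₃ + g₁ * e₂ * g₃ + g₁ * g₂ * e₃) + x ^ 5 * g₁ * g₂ * g₃),
    by ring⟩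

section CoppersmithWinograd

variable (F : Type*) [Field F] (q : ℕ)

def basisVec (n : ℕ) (i : Fin (q + 2)) : F := if (i : ℕ) = n then 1 else 0

noncomputable def cwVec : Icc 1 q ⊕ Fin 2 → Fin (q + 2) → F[X] :=
  Sum.elim (fun l i => C (basisVec F q 0 i) + X * C (basisVec F q l i))
    ![fun i => C (basisVec F q 0 i) + X ^ 2 * ∑ l ∈ Icc 1 q, C (basisVec F q l i),
      fun i => C (basisVec F q 0 i) + X ^ 3 * C (basisVec F q (q + 1) i)]

noncomputable def cwScalar : Icc 1 q ⊕ Fin 2 → F[X] :=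
  Sum.elim (fun _ => X) ![-1, 1 - (q : F[X]) * X]

theorem sum_Icc_basisVec_mul_basisVec (s t : Fin (q + 2)) :
    ∑ l ∈ Icc 1 q, basisVec F q l s * basisVec F q l t =
      if (s : ℕ) = t ∧ 1 ≤ (s : ℕ) ∧ (s : ℕ) ≤ q then 1 else 0 := by
  simp only [basisVec, ite_mul, one_mul, zero_mul, sum_ite_eq, mem_Icc]
  grind

theorem TCW_eq_basisVec (i j k : Fin (q + 2)) :
    TCW F q i j k =
      basisVec F q 0 i * ∑ l ∈ Icc 1 q, basisVec F q l j * basisVec F q l k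
      + basisVec F q 0 j * ∑ l ∈ Icc 1 q, basisVec F q l i * basisVec F q l k
      + basisVec F q 0 k * ∑ l ∈ Icc 1 q, basisVec F q l i * basisVec F q l j
      + basisVec F q 0 i * (basisVec F q 0 j * basisVec F q (q + 1) k)
      + basisVec F q 0 i * (basisVec F q (q + 1) j * basisVec F q 0 k)
      + basisVec F q (q + 1) i * (basisVec F q 0 j * basisVec F q 0 k) := by
  simp only [sum_Icc_basisVec_mul_basisVec]
  simp only [basisVec, ite_zero_mul_ite_zero, mul_one]
  rfl

theorem X_pow_four_dvd_sum_cwScalar_mul_cwVec (i j k : Fin (q + 2)) :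
    X ^ 4 ∣ ∑ l, cwScalar F q l * cwVec F q l i * cwVec F q l j * cwVec F q l k
      - C (TCW F q i j k) * X ^ 3 := by
  have hcw := pow_four_dvd_cw_expansion (Icc 1 q) X (C (basisVec F q 0 i)) (C (basisVec F q 0 j))
    (C (basisVec F q 0 k)) (C (basisVec F q (q + 1) i)) (C (basisVec F q (q + 1) j))
    (C (basisVec F q (q + 1) k)) (fun l => C (basisVec F q l i)) (fun l => C (basisVec F q l j))
    (fun l => C (basisVec F q l k))
  convert hcw using 2
  · simp only [Fintype.sum_sum_type, Fin.sum_univ_two, cwScalar, cwVec, Sum.elim_inl, Sum.elim_inr,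
      Matrix.cons_val_zero, Matrix.cons_val_one, ← sum_coe_sort (Icc 1 q), Nat.card_Icc,
      Nat.add_sub_cancel]
    ring
  · rw [TCW_eq_basisVec, mul_comm]
    simp only [map_add, map_mul, map_sum]

end CoppersmithWinograd

/-- The border rank of the Coppersmith–Winograd tensor satisfies `R̲(T_CW) ≤ q + 2`. -/
theorem stmt5 {F : Type*} [Field F] (q : ℕ) : borderRank (TCW F q) ≤ q + 2 := by
  have hdecomp := borderDecomp_of_X_pow_succ_dvd 3
    (fun l i => cwScalar F q l * cwVec F q l i) (cwVec F q) (cwVec F q)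
    (X_pow_four_dvd_sum_cwScalar_mul_cwVec F q)
  have hcard : Fintype.card (Icc 1 q ⊕ Fin 2) = q + 2 := by simp
  rw [hcard] at hdecomp
  exact Nat.sInf_le hdecomp
end
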